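/- arXiv:2303.14796 — 2 statements merged into one kernel-verified Lean document; each statement's English description precedes it below -/
import Mathlib

section
/- Let σ_{π₁},…,σ_{π_n} ∈ Stmt₀^ω, let σ be the composed trace with σ_t = ((σ_{π₁})_{π₁})_t; … ; ((σ_{π_n})_{π_n})_t, let X ∈ (2^{ρ̂∪υ̂})^ω, and let ζ̂ be a hyper-computation with ζ̂ ◁ combine(σ, X). Then for every 1 ≤ j ≤ n, the reduced computation ζ̂|π_j matches σ_{π_j}, i.e. ζ̂|π_j ◁ σ_{π_j}. -/
namespace TSLMC

open scoped Classical

/-! ### Theories, function terms, assignments -/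

/-- A theory: interpretation of function symbols, plus distinguished values true/false. -/
structure Thy (V F : Type) where
  ε : F → List V → V
  vtrue : V
  vfalse : V

/-- Function terms over inputs `I`, cells `C` and function symbols `F`. -/
inductive FTerm (I C F : Type) : Type where
  | inp  : I → FTerm I C F
  | cell : C → FTerm I C F
  | app  : F → List (FTerm I C F) → FTerm I C F

/-- An assignment gives values to inputs and cells. -/
abbrev Assign (V I C : Type) := I ⊕ C → V

variable {V I C F Pi : Type}

/-- Evaluation of a function term under an assignment. -/
def FTerm.eval (T : Thy V F) (a : Assign V I C) : FTerm I C F → V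
  | .inp i => a (.inl i)
  | .cell c => a (.inr c)
  | .app f ts => T.ε f (ts.attach.map fun t => t.1.eval T a)
decreasing_by
  have := List.sizeOf_lt_of_mem t.2
  simp only [FTerm.app.sizeOf_spec]
  omega

/-- A predicate term is a function term evaluating only to true or false. -/
def IsPredTerm (T : Thy V F) (τ : FTerm I C F) : Prop :=
  ∀ a : Assign V I C, τ.eval T a = T.vtrue ∨ τ.eval T a = T.vfalse

/-- The theory contains (at least) equality, negation, conjunction and a true constant,
with their usual interpretations, and true ≠ false. -/
structure Ops (V F : Type) (T : Thy V F) where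
  feq : F
  fneg : F
  fand : F
  ftrue : F
  heq : ∀ x y : V, T.ε feq [x, y] = if x = y then T.vtrue else T.vfalse
  hneg : ∀ x : V, T.ε fneg [x] = if x = T.vtrue then T.vfalse else T.vtrue
  hand : ∀ x y : V, T.ε fand [x, y] = if x = T.vtrue ∧ y = T.vtrue then T.vtrue else T.vfalse
  htrue : T.ε ftrue [] = T.vtrue
  tne : T.vtrue ≠ T.vfalse

/-! ### TSL(T) formulas -/

/-- TSL(T) formulas (atoms: predicate terms and update terms `⟦c ↞ τ⟧`). -/
inductive TSL (I C F : Type) : Type where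
  | pred : FTerm I C F → TSL I C F
  | upd  : C → FTerm I C F → TSL I C F
  | not  : TSL I C F → TSL I C F
  | and  : TSL I C F → TSL I C F → TSL I C F
  | next : TSL I C F → TSL I C F
  | untl : TSL I C F → TSL I C F → TSL I C F

/-- `prevA init ζ t` is `ζ (t-1)`, with the fixed initial assignment at `t = 0`. -/
def prevA (init : Assign V I C) (ζ : ℕ → Assign V I C) : ℕ → Assign V I C
  | 0 => init
  | t + 1 => ζ t

/-- Satisfaction of a TSL(T) formula over a computation at a time point. -/
def TSL.sat (T : Thy V F) (init : Assign V I C) (ζ : ℕ → Assign V I C) :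
    TSL I C F → ℕ → Prop
  | .pred τ, t => τ.eval T (ζ t) = T.vtrue
  | .upd c τ, t => τ.eval T (prevA init ζ t) = ζ t (.inr c)
  | .not φ, t => ¬ φ.sat T init ζ t
  | .and φ ψ, t => φ.sat T init ζ t ∧ ψ.sat T init ζ t
  | .next φ, t => φ.sat T init ζ (t + 1)
  | .untl φ ψ, t => ∃ t', t ≤ t' ∧ ψ.sat T init ζ t' ∧
      ∀ t'', t ≤ t'' → t'' < t' → φ.sat T init ζ t''

/-- The list of predicate terms appearing in a TSL(T) formula. -/
def TSL.predList : TSL I C F → List (FTerm I C F)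
  | .pred τ => [τ]
  | .upd _ _ => []
  | .not φ => φ.predList
  | .and φ ψ => φ.predList ++ ψ.predList
  | .next φ => φ.predList
  | .untl φ ψ => φ.predList ++ ψ.predList

/-- The list of update terms appearing in a TSL(T) formula. -/
def TSL.updList : TSL I C F → List (C × FTerm I C F)
  | .pred _ => []
  | .upd c τ => [(c, τ)]
  | .not φ => φ.updList
  | .and φ ψ => φ.updList ++ ψ.updList
  | .next φ => φ.updList
  | .untl φ ψ => φ.updList ++ ψ.updList

/-! ### LTL -/

/-- LTL formulas over atomic propositions `A`. -/
inductive LTL (A : Type) : Type where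
  | atom : A → LTL A
  | not : LTL A → LTL A
  | and : LTL A → LTL A → LTL A
  | next : LTL A → LTL A
  | untl : LTL A → LTL A → LTL A

/-- Standard LTL satisfaction over words of sets of atomic propositions. -/
def LTL.sat (w : ℕ → Set A) : LTL A → ℕ → Prop
  | .atom a, t => a ∈ w t
  | .not φ, t => ¬ φ.sat w t
  | .and φ ψ, t => φ.sat w t ∧ ψ.sat w t
  | .next φ, t => φ.sat w (t + 1)
  | .untl φ ψ, t => ∃ t', t ≤ t' ∧ ψ.sat w t' ∧ ∀ t'', t ≤ t'' → t'' < t' → φ.sat w t''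

/-- Atomic propositions: predicate terms and update terms. -/
abbrev AP (I C F : Type) := FTerm I C F ⊕ (C × FTerm I C F)

/-- The LTL formula obtained from a TSL(T) formula by treating predicate and
update terms as atomic propositions. -/
def TSL.toLTL : TSL I C F → LTL (AP I C F)
  | .pred τ => .atom (.inl τ)
  | .upd c τ => .atom (.inr (c, τ))
  | .not φ => .not φ.toLTL
  | .and φ ψ => .and φ.toLTL ψ.toLTL
  | .next φ => .next φ.toLTL
  | .untl φ ψ => .untl φ.toLTL ψ.toLTL

/-- `SeqW T init ζ ρ υ t` is the set of predicate terms of `ρ` and update terms of `υ`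
that hold at time `t` of the computation `ζ`. -/
def SeqW (T : Thy V F) (init : Assign V I C) (ζ : ℕ → Assign V I C)
    (ρ : Set (FTerm I C F)) (υ : Set (C × FTerm I C F)) : ℕ → Set (AP I C F) :=
  fun t => {a | Sum.elim
    (fun τ => τ ∈ ρ ∧ TSL.sat T init ζ (.pred τ) t)
    (fun u => u ∈ υ ∧ TSL.sat T init ζ (.upd u.1 u.2) t) a}

/-! ### Program statements, matching, feasibility -/

/-- Basic program statements. -/
inductive Stmt0 (I C F : Type) : Type where
  | assert : FTerm I C F → Stmt0 I C F
  | assign : C → FTerm I C F → Stmt0 I C F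
  | havoc : C → Stmt0 I C F

/-- Program statements: nonempty finite sequences of basic statements. -/
abbrev Stmt (I C F : Type) := {l : List (Stmt0 I C F) // l ≠ []}

/-- A computation matches a trace of basic statements at time `t`. -/
def matchesAt (T : Thy V F) (init : Assign V I C) (ζ : ℕ → Assign V I C)
    (σ : ℕ → Stmt0 I C F) (t : ℕ) : Prop :=
  match σ t with
  | .assert τ => τ.eval T (prevA init ζ t) = T.vtrue ∧
      ∀ c : C, ζ t (.inr c) = prevA init ζ t (.inr c)
  | .assign c τ => ζ t (.inr c) = τ.eval T (prevA init ζ t) ∧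
      ∀ c', c' ≠ c → ζ t (.inr c') = prevA init ζ t (.inr c')
  | .havoc c => ∀ c', c' ≠ c → ζ t (.inr c') = prevA init ζ t (.inr c')

/-- A computation matches a trace of basic statements. -/
def Matches (T : Thy V F) (init : Assign V I C) (ζ : ℕ → Assign V I C)
    (σ : ℕ → Stmt0 I C F) : Prop :=
  ∀ t, matchesAt T init ζ σ t

/-- Position (index of the statement, offset inside it) of the `j`-th basic statement
in the flattening of a trace of composed statements. -/
def fpos (σ : ℕ → Stmt I C F) : ℕ → ℕ × ℕ
  | 0 => (0, 0)
  | j + 1 =>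
    let p := fpos σ j
    if p.2 + 1 < ((σ p.1).1).length then (p.1, p.2 + 1) else (p.1 + 1, 0)

/-- The flattening of a trace of composed statements into basic statements. -/
def flatten (σ : ℕ → Stmt I C F) (j : ℕ) : Stmt0 I C F :=
  ((σ (fpos σ j).1).1).getD (fpos σ j).2 (((σ (fpos σ j).1).1).head (σ (fpos σ j).1).2)

/-- A computation matches a trace of composed statements (via its flattening). -/
def MatchesC (T : Thy V F) (init : Assign V I C) (ζ : ℕ → Assign V I C)
    (σ : ℕ → Stmt I C F) : Prop :=
  Matches T init ζ (flatten σ)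

/-- A trace of composed statements is feasible if some computation matches it. -/
def Feasible (T : Thy V F) (init : Assign V I C) (σ : ℕ → Stmt I C F) : Prop :=
  ∃ ζ, MatchesC T init ζ σ

/-- A trace of basic statements is feasible if some computation matches it. -/
def Feasible0 (T : Thy V F) (init : Assign V I C) (σ : ℕ → Stmt0 I C F) : Prop :=
  ∃ ζ, Matches T init ζ σ

/-! ### Büchi automata -/

/-- A Büchi automaton. -/
structure Buchi (A : Type) (Q : Type) where
  q0 : Q
  δ : Q → A → Q → Prop
  Acc : Set Q

/-- A run of a Büchi automaton on a word. -/
def Buchi.IsRun {A Q : Type} (B : Buchi A Q) (σ : ℕ → A) (r : ℕ → Q) : Prop :=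
  r 0 = B.q0 ∧ ∀ t, B.δ (r t) (σ t) (r (t + 1))

/-- Büchi acceptance: some run visits accepting states infinitely often. -/
def Buchi.Accepts {A Q : Type} (B : Buchi A Q) (σ : ℕ → A) : Prop :=
  ∃ r, B.IsRun σ r ∧ ∀ n, ∃ m, n ≤ m ∧ r m ∈ B.Acc

/-- A program automaton over basic statements satisfies a TSL(T) formula if every
computation matching an accepted trace satisfies the formula. -/
def SatisfiesTSL {Qp : Type} (T : Thy V F) (init : Assign V I C)
    (P : Buchi (Stmt0 I C F) Qp) (φ : TSL I C F) : Prop :=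
  ∀ σ, P.Accepts σ → ∀ ζ, Matches T init ζ σ → φ.sat T init ζ 0

/-! ### The combine construction and the Büchi program product -/

/-- Extended cell set: original cells, inputs-as-cells, and fresh `tmp` cells. -/
abbrev CStar (I C : Type) := (C ⊕ I) ⊕ ℕ

/-- Embedding of terms over inputs/cells into terms over the extended cell set. -/
def FTerm.embed : FTerm I C F → FTerm Empty (CStar I C) F
  | .inp i => .cell (.inl (.inr i))
  | .cell c => .cell (.inl (.inl c))
  | .app f ts => .app f (ts.attach.map fun t => t.1.embed)
decreasing_by
  have := List.sizeOf_lt_of_mem t.2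
  simp only [FTerm.app.sizeOf_spec]
  omega

/-- Embedding of basic statements into statements over the extended cell set. -/
def Stmt0.embed : Stmt0 I C F → Stmt0 Empty (CStar I C) F
  | .assert τ => .assert τ.embed
  | .assign c τ => .assign (.inl (.inl c)) τ.embed
  | .havoc c => .havoc (.inl (.inl c))

/-- Conjunction of a list of terms (via the theory's conjunction symbol). -/
def conjTerm (T : Thy V F) (O : Ops V F T) :
    List (FTerm Empty (CStar I C) F) → FTerm Empty (CStar I C) F
  | [] => .app O.ftrue []
  | τ :: ts => .app O.fand [τ, conjTerm T O ts]

/-- The `combine` construction: `save_values; s; new_inputs; check_preds_l; check_updates_l`. -/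
noncomputable def combine (T : Thy V F) (O : Ops V F T) (ρ : List (FTerm I C F))
    (υ : List (C × FTerm I C F)) (inps : List I)
    (s : List (Stmt0 I C F)) (l : Set (AP I C F)) : Stmt Empty (CStar I C) F :=
  ⟨(υ.mapIdx fun j u => Stmt0.assign (Sum.inr j) u.2.embed)
    ++ s.map Stmt0.embed
    ++ (inps.map fun i => Stmt0.havoc (Sum.inl (Sum.inr i)))
    ++ [Stmt0.assert (conjTerm T O
          (ρ.map fun τ => if Sum.inl τ ∈ l then τ.embed else .app O.fneg [τ.embed])),
        Stmt0.assert (conjTerm T O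
          (υ.mapIdx fun j u =>
            let eqt : FTerm Empty (CStar I C) F :=
              .app O.feq [.cell (Sum.inl (Sum.inl u.1)), .cell (Sum.inr j)]
            if Sum.inr u ∈ l then eqt else .app O.fneg [eqt]))],
    by simp⟩

/-- Lifting an automaton over basic statements to an automaton over (composed) statements. -/
def liftB {Qp : Type} (P : Buchi (Stmt0 I C F) Qp) : Buchi (Stmt I C F) Qp where
  q0 := P.q0
  δ := fun q w q' => ∃ s, P.δ q s q' ∧ w = ⟨[s], by simp⟩
  Acc := P.Acc

/-- The combined product `P ⊗ A` of a program automaton and a Büchi automaton over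
sets of predicate/update terms. -/
noncomputable def product {Qp Qa : Type} (T : Thy V F) (O : Ops V F T)
    (P : Buchi (Stmt I C F) Qp) (A : Buchi (Set (AP I C F)) Qa)
    (ρ : List (FTerm I C F)) (υ : List (C × FTerm I C F)) (inps : List I) :
    Buchi (Stmt Empty (CStar I C) F) (Qp × Qa) where
  q0 := (P.q0, A.q0)
  δ := fun x w y => ∃ s l, P.δ x.1 s y.1 ∧ A.δ x.2 l y.2 ∧ w = combine T O ρ υ inps s.1 l
  Acc := {x | x.2 ∈ A.Acc}

/-! ### HyperTSL(T) -/

/-- HyperTSL(T) formulas: a quantifier prefix over trace variables, followed by a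
quantifier-free formula over trace-indexed inputs and cells. -/
inductive HyperTSL (I C F Pi : Type) : Type where
  | qf : TSL (I × Pi) (C × Pi) F → HyperTSL I C F Pi
  | all : Pi → HyperTSL I C F Pi → HyperTSL I C F Pi
  | ex : Pi → HyperTSL I C F Pi → HyperTSL I C F Pi

/-- Extension `ζ̂[π, ζ]` of a hyper-computation by a computation for trace variable `π`. -/
noncomputable def extendH (ζh : ℕ → Assign V (I × Pi) (C × Pi)) (π : Pi)
    (ζ : ℕ → Assign V I C) : ℕ → Assign V (I × Pi) (C × Pi) :=
  fun t x =>
    match x with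
    | .inl (i, π') => if π' = π then ζ t (.inl i) else ζh t (.inl (i, π'))
    | .inr (c, π') => if π' = π then ζ t (.inr c) else ζh t (.inr (c, π'))

/-- Satisfaction of a HyperTSL(T) formula. -/
noncomputable def HyperTSL.sat (T : Thy V F) (init : Assign V (I × Pi) (C × Pi))
    (Z : Set (ℕ → Assign V I C)) :
    HyperTSL I C F Pi → (ℕ → Assign V (I × Pi) (C × Pi)) → ℕ → Prop
  | .qf ψ, ζh, t => ψ.sat T init ζh t
  | .all π φ, ζh, t => ∀ ζ ∈ Z, φ.sat T init Z (extendH ζh π ζ) t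
  | .ex π φ, ζh, t => ∃ ζ ∈ Z, φ.sat T init Z (extendH ζh π ζ) t

/-- Lift an assignment to a hyper-assignment (every trace gets the same values). -/
def liftInit (init : Assign V I C) : Assign V (I × Pi) (C × Pi) :=
  fun x => match x with
  | .inl (i, _) => init (.inl i)
  | .inr (c, _) => init (.inr c)

/-- The set of computations matching accepted traces of a program automaton. -/
def Zof {Qp : Type} (T : Thy V F) (init : Assign V I C)
    (P : Buchi (Stmt0 I C F) Qp) : Set (ℕ → Assign V I C) :=
  {ζ | ∃ σ, P.Accepts σ ∧ Matches T init ζ σ}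

/-- A program automaton satisfies a HyperTSL(T) formula. -/
noncomputable def SatisfiesHyper {Qp : Type} (T : Thy V F) (init : Assign V I C)
    (P : Buchi (Stmt0 I C F) Qp) (φ : HyperTSL I C F Pi) : Prop :=
  φ.sat T (liftInit init) (Zof T init P) (fun _ => liftInit init) 0

/-- Renaming of terms: cell `c` becomes `c_π`, input `i` becomes `i_π`. -/
def FTerm.rename (π : Pi) : FTerm I C F → FTerm (I × Pi) (C × Pi) F
  | .inp i => .inp (i, π)
  | .cell c => .cell (c, π)
  | .app f ts => .app f (ts.attach.map fun t => t.1.rename π)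
decreasing_by
  have := List.sizeOf_lt_of_mem t.2
  simp only [FTerm.app.sizeOf_spec]
  omega

/-- Renaming of basic statements to a trace variable. -/
def Stmt0.rename (π : Pi) : Stmt0 I C F → Stmt0 (I × Pi) (C × Pi) F
  | .assert τ => .assert (τ.rename π)
  | .assign c τ => .assign (c, π) (τ.rename π)
  | .havoc c => .havoc (c, π)

/-- The `n`-fold self-composition of a program automaton. -/
def selfComp {Qp : Type} (P : Buchi (Stmt0 I C F) Qp) (n : ℕ) :
    Buchi (Stmt (I × Fin n) (C × Fin n) F) (Fin n → Qp) where
  q0 := fun _ => P.q0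
  δ := fun q w q' => ∃ ss : Fin n → Stmt0 I C F,
        (∀ j, P.δ (q j) (ss j) (q' j)) ∧
        w.1 = (List.finRange n).map fun j => (ss j).rename j
  Acc := Set.univ

/-- The `m`-fold self-composition, using the first `m` of `n` trace variables. -/
def selfCompInto {Qp : Type} (P : Buchi (Stmt0 I C F) Qp) (m n : ℕ) (h : m ≤ n) :
    Buchi (Stmt (I × Fin n) (C × Fin n) F) (Fin m → Qp) where
  q0 := fun _ => P.q0
  δ := fun q w q' => ∃ ss : Fin m → Stmt0 I C F,
        (∀ j, P.δ (q j) (ss j) (q' j)) ∧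
        w.1 = (List.finRange m).map fun j => (ss j).rename (Fin.castLE h j)
  Acc := Set.univ

end TSLMC

/-! ### k-feasibility and the automaton `P_k` -/

namespace TSLMC
open scoped Classical
variable {V I C F Pi : Type}

/-- The statement `assert(true)`. -/
def trueStmt (T : Thy V F) (O : Ops V F T) : Stmt I C F :=
  ⟨[.assert (.app O.ftrue [])], by simp⟩

/-- Extend a finite window of statements by `assert(true)^ω`. -/
def extendTrue (T : Thy V F) (O : Ops V F T) (ss : List (Stmt I C F)) : ℕ → Stmt I C F :=
  fun t => if h : t < ss.length then ss.get ⟨t, h⟩ else trueStmt T O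

/-- A finite window of statements is feasible if, followed by `assert(true)^ω`, it is
feasible for some initial assignment. -/
def WinFeasible (T : Thy V F) (O : Ops V F T) (ss : List (Stmt I C F)) : Prop :=
  ∃ init : Assign V I C, Feasible T init (extendTrue T O ss)

/-- The window `σ_j … σ_{j+k-1}` of a trace. -/
def window (σ : ℕ → α) (j k : ℕ) : List α :=
  (List.range k).map fun i => σ (j + i)

/-- A trace is `k`-feasible if no window of `k` consecutive statements is infeasible
for all initial assignments. -/
def KFeasible (T : Thy V F) (O : Ops V F T) (k : ℕ) (σ : ℕ → Stmt I C F) : Prop :=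
  ∀ j, WinFeasible T O (window σ j k)

/-- Chains of transitions of an automaton. -/
def chain {S Qp : Type} (P : Buchi S Qp) : Qp → List (S × Qp) → Prop
  | _, [] => True
  | q, (s, q') :: rest => P.δ q s q' ∧ chain P q' rest

/-- The last state of an alternating state/statement sequence. -/
def lastQ {S Qp : Type} (st : Qp × List (S × Qp)) : Qp :=
  (st.2.getLast?).elim st.1 Prod.snd

/-- The statements of an alternating state/statement sequence. -/
def stmts {S Qp : Type} (st : Qp × List (S × Qp)) : List S :=
  st.2.map Prod.fst

/-- Valid states of `P_k`: chains of transitions of `P` of length `k-1`, or shorter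
ones starting at the initial state. -/
def ValidSt {S Qp : Type} (P : Buchi S Qp) (k : ℕ) (st : Qp × List (S × Qp)) : Prop :=
  chain P st.1 st.2 ∧ (st.2.length = k - 1 ∨ (st.2.length < k - 1 ∧ st.1 = P.q0))

/-- Extend an alternating sequence by a transition, dropping the first entry if the
window is full. -/
def push {S Qp : Type} (k : ℕ) (st : Qp × List (S × Qp)) (s : S) (q' : Qp) :
    Qp × List (S × Qp) :=
  let l' := st.2 ++ [(s, q')]
  if k ≤ l'.length then
    match l' with
    | [] => (st.1, [])
    | e :: rest => (e.2, rest)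
  else (st.1, l')

/-- The automaton `P_k`: `P` without `k`-infeasibility. -/
def Pk {Qp : Type} (T : Thy V F) (O : Ops V F T) (P : Buchi (Stmt I C F) Qp) (k : ℕ) :
    Buchi (Stmt I C F) (Qp × List (Stmt I C F × Qp)) where
  q0 := (P.q0, [])
  δ := fun st s st' => ValidSt P k st ∧ ValidSt P k st' ∧
        ∃ q', P.δ (lastQ st) s q' ∧ WinFeasible T O (stmts st ++ [s]) ∧ st' = push k st s q'
  Acc := {st | lastQ st ∈ P.Acc}

/-! ### Infeasible accepting cycles and their removal -/

/-- The trace `(s₁ … s_n)^ω` of a cycle. -/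
def cycTrace (T : Thy V F) (O : Ops V F T) {Qp : Type}
    (ϱ : List (Qp × Stmt I C F × Qp)) : ℕ → Stmt I C F :=
  fun t => ((ϱ[t % ϱ.length]?).map fun e => e.2.1).getD (trueStmt T O)

/-- `ϱ` is a cycle of transitions of `B`. -/
def IsCycle {S Qp : Type} (B : Buchi S Qp) (ϱ : List (Qp × S × Qp)) : Prop :=
  ϱ ≠ [] ∧ (∀ e ∈ ϱ, B.δ e.1 e.2.1 e.2.2) ∧
  (∀ i, (h : i + 1 < ϱ.length) →
    (ϱ.get ⟨i + 1, h⟩).1 = (ϱ.get ⟨i, Nat.lt_of_succ_lt h⟩).2.2) ∧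
  ∀ h : ϱ ≠ [], (ϱ.getLast h).2.2 = (ϱ.head h).1

/-- An infeasible accepting cycle. -/
def InfAccCycle {Qp : Type} (T : Thy V F) (O : Ops V F T)
    (B : Buchi (Stmt I C F) Qp) (ϱ : List (Qp × Stmt I C F × Qp)) : Prop :=
  IsCycle B ϱ ∧ (∃ e ∈ ϱ, e.1 ∈ B.Acc) ∧
  ∀ init : Assign V I C, ¬ Feasible T init (cycTrace T O ϱ)

/-- A trace ends with the infinite repetition of the statements of the cycle `ϱ`. -/
def EndsWithCyc {Qp : Type} (T : Thy V F) (O : Ops V F T)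
    (σ : ℕ → Stmt I C F) (ϱ : List (Qp × Stmt I C F × Qp)) : Prop :=
  ∃ N, ∀ j, σ (N + j) = cycTrace T O ϱ j

/-- The automaton `A_ϱ`, accepting exactly the traces ending with `ϱ^ω`. -/
def cycAut {Qp : Type} (ϱ : List (Qp × Stmt I C F × Qp)) :
    Buchi (Stmt I C F) (Option (Fin ϱ.length)) where
  q0 := none
  δ := fun st s st' =>
    match st with
    | none => st' = none ∨ ∃ h : ϱ ≠ [],
        s = (ϱ.head h).2.1 ∧
        st' = some ⟨1 % ϱ.length, Nat.mod_lt _ (List.length_pos_iff.mpr h)⟩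
    | some i => s = (ϱ.get i).2.1 ∧
        st' = some ⟨((i : ℕ) + 1) % ϱ.length,
          Nat.mod_lt _ (Nat.lt_of_le_of_lt (Nat.zero_le _) i.isLt)⟩
  Acc := {st | st ≠ none}

/-- A Büchi automaton bundled with its state type. -/
structure BAut (A : Type) : Type 1 where
  Q : Type
  B : Buchi A Q

/-- One removal step: remove (the languages of the automata `A_ϱ` for) a set of
infeasible accepting cycles from an automaton. -/
def RemStep (T : Thy V F) (O : Ops V F T) (x y : BAut (Stmt I C F)) : Prop :=
  ∃ Cset : Set (List (x.Q × Stmt I C F × x.Q)),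
    (∀ ϱ ∈ Cset, InfAccCycle T O x.B ϱ) ∧
    ∀ σ, y.B.Accepts σ ↔ (x.B.Accepts σ ∧ ∀ ϱ ∈ Cset, ¬ EndsWithCyc T O σ ϱ)

/-- `k'` iterations of removing infeasible accepting cycles. -/
def RemChain (T : Thy V F) (O : Ops V F T) :
    ℕ → BAut (Stmt I C F) → BAut (Stmt I C F) → Prop
  | 0, x, y => y = x
  | k' + 1, x, y => ∃ z, RemChain T O k' x z ∧ RemStep T O z y

/-- The universal projection of (a refinement of) the combined product: keep the first
`m` of the `n` statements of each `combine`-labelled transition. -/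
noncomputable def projU {Q' : Type} (T : Thy V F) (O : Ops V F T) {m n : ℕ}
    (_hm : 0 < m) (hmn : m ≤ n)
    (ρ : List (FTerm (I × Fin n) (C × Fin n) F))
    (υ : List ((C × Fin n) × FTerm (I × Fin n) (C × Fin n) F))
    (inps : List (I × Fin n))
    (B : Buchi (Stmt Empty (CStar (I × Fin n) (C × Fin n)) F) Q') :
    Buchi (Stmt (I × Fin n) (C × Fin n) F) Q' where
  q0 := B.q0
  δ := fun q w q' => ∃ (ss : Fin n → Stmt0 (I × Fin n) (C × Fin n) F)
        (l : Set (AP (I × Fin n) (C × Fin n) F)),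
        B.δ q (combine T O ρ υ inps ((List.finRange n).map ss) l) q' ∧
        w.1 = (List.finRange m).map fun j => ss (Fin.castLE hmn j)
  Acc := B.Acc

/-- The formula `∀π₁ … ∀π_m ∃π_{m+1} … ∃π_n. ψ`. -/
def AEform (m n : ℕ) (ψ : TSL (I × Fin n) (C × Fin n) F) : HyperTSL I C F (Fin n) :=
  (List.finRange n).foldr
    (fun (j : Fin n) acc => if (j : ℕ) < m then HyperTSL.all j acc else HyperTSL.ex j acc)
    (.qf ψ)

end TSLMC
/-! ### Reduced and adapted computations -/

namespace TSLMC
open scoped Classical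
variable {V I C F Pi : Type}

/-- The index `ι(t) = B·(t+1) − 3` for blocks of length `B`. -/
def iotaIdx (B t : ℕ) : ℕ := B * (t + 1) - 3

/-- The reduced computation: the combined computation at the indices `ι(t)`,
restricted to the original inputs and cells. -/
def reduceC (B : ℕ) (ζ : ℕ → Assign V Empty (CStar I C)) : ℕ → Assign V I C :=
  fun t x => ζ (iotaIdx B t) (.inr (.inl x.swap))

/-- The reduced computation of trace variable `j`: the combined hyper-computation at
the indices `ι(t)`, restricted to the `j`-indexed inputs and cells, renamed back. -/
def reduceTr {n : ℕ} (B : ℕ) (j : Fin n)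
    (ζ : ℕ → Assign V Empty (CStar (I × Fin n) (C × Fin n))) : ℕ → Assign V I C :=
  fun t x => ζ (iotaIdx B t)
    (.inr (.inl (match x with | .inl i => .inr (i, j) | .inr c => .inl (c, j))))

/-- Assembling a hyper-computation from one computation per trace variable
(`∅[π₁, ζ₁]…[π_n, ζ_n]`). -/
def assembleH {n : ℕ} (red : Fin n → ℕ → Assign V I C) :
    ℕ → Assign V (I × Fin n) (C × Fin n) :=
  fun t x => match x with
  | .inl (i, j) => red j t (.inl i)
  | .inr (c, j) => red j t (.inr c)

/-- The adapted computation `ζ̃` of a computation `ζ`. -/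
noncomputable def adapt (T : Thy V F) (upds : List (C × FTerm I C F)) (inps : List I)
    (init : Assign V I C) (initC : Assign V Empty (CStar I C))
    (ζ : ℕ → Assign V I C) : ℕ → Assign V Empty (CStar I C) := fun idx x =>
  let m := upds.length
  let k := inps.length
  let b := idx / (m + k + 3)
  let i := idx % (m + k + 3)
  let newTmp : ℕ → V := fun p =>
    ((upds[p]?).map fun u => u.2.eval T (prevA init ζ b)).getD (initC (.inr (.inr p)))
  let oldTmp : ℕ → V := fun p =>
    match b with
    | 0 => initC (.inr (.inr p))
    | b' + 1 => ((upds[p]?).map fun u => u.2.eval T (prevA init ζ b')).getD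
        (initC (.inr (.inr p)))
  match x with
  | .inl e => e.elim
  | .inr (.inr p) => if i < m then (if p ≤ i then newTmp p else oldTmp p) else newTmp p
  | .inr (.inl (.inl c)) => if i < m then prevA init ζ b (.inr c) else ζ b (.inr c)
  | .inr (.inl (.inr ii)) =>
      if i < m + 1 then prevA init ζ b (.inl ii)
      else if i ≤ m + k then
        (if inps.idxOf ii < i - m then ζ b (.inl ii) else prevA init ζ b (.inl ii))
      else ζ b (.inl ii)

/-- The adapted hyper-computation of computations `ζ_{π₁}, …, ζ_{π_n}`. -/
noncomputable def hadapt {n : ℕ} (T : Thy V F)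
    (upds : List ((C × Fin n) × FTerm (I × Fin n) (C × Fin n) F))
    (inps : List (I × Fin n)) (init : Assign V I C)
    (initC : Assign V Empty (CStar (I × Fin n) (C × Fin n)))
    (ζs : Fin n → ℕ → Assign V I C) :
    ℕ → Assign V Empty (CStar (I × Fin n) (C × Fin n)) := fun idx x =>
  let m := upds.length
  let k := inps.length
  let b := idx / (m + n + k + 2)
  let i := idx % (m + n + k + 2)
  let ζ' : ℕ → Assign V (I × Fin n) (C × Fin n) := assembleH ζs
  let hinit : Assign V (I × Fin n) (C × Fin n) := liftInit init
  let newTmp : ℕ → V := fun p =>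
    ((upds[p]?).map fun u => u.2.eval T (prevA hinit ζ' b)).getD (initC (.inr (.inr p)))
  let oldTmp : ℕ → V := fun p =>
    match b with
    | 0 => initC (.inr (.inr p))
    | b' + 1 => ((upds[p]?).map fun u => u.2.eval T (prevA hinit ζ' b')).getD
        (initC (.inr (.inr p)))
  match x with
  | .inl e => e.elim
  | .inr (.inr p) => if i < m then (if p ≤ i then newTmp p else oldTmp p) else newTmp p
  | .inr (.inl (.inl cj)) =>
      if i < m then prevA hinit ζ' b (.inr cj)
      else if i < m + n then
        (if (cj.2 : ℕ) < i - m + 1 then ζs cj.2 b (.inr cj.1)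
         else prevA hinit ζ' b (.inr cj))
      else ζ' b (.inr cj)
  | .inr (.inl (.inr ij)) =>
      if i < m + n then prevA hinit ζ' b (.inl ij)
      else if i < m + n + k then
        (if inps.idxOf ij < i - (m + n) + 1 then ζ' b (.inl ij)
         else prevA hinit ζ' b (.inl ij))
      else ζ' b (.inl ij)

/-- The composed trace `σ_t = ((σ_{π₁})_{π₁})_t; … ; ((σ_{π_n})_{π_n})_t`. -/
def composedTrace {n : ℕ} (σs : Fin n → ℕ → Stmt0 I C F) (t : ℕ) :
    List (Stmt0 (I × Fin n) (C × Fin n) F) :=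
  (List.finRange n).map fun j => (σs j t).rename j

/-- The composed trace, as a trace of (nonempty) program statements. -/
def composedStmt {n : ℕ} (hn : 0 < n) (σs : Fin n → ℕ → Stmt0 I C F) (t : ℕ) :
    Stmt (I × Fin n) (C × Fin n) F :=
  ⟨composedTrace σs t, by
    intro h
    have := congrArg List.length h
    simp [composedTrace] at this
    omega⟩

end TSLMC

/-!
The combined trace consists of blocks of length `B = |𝕀×Π| + |υ̂| + n + 2`, and in block `t`
the statement at offset `|υ̂| + j` is the renamed copy of `(σ_{π_j})_t`. No other statement of
the block writes a cell of `π_j`, and the inputs of `π_j` are written only by `new_inputs`, which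
ends at position `ι(t)`. Hence just before that statement the variables of `π_j` still hold
their values at `ι(t-1)` (or the initial ones), and at `ι(t)` the cells of `π_j` hold the values
the statement produced. Matching the renamed statement therefore amounts to matching
`(σ_{π_j})_t` between the reduced assignments at `t-1` and `t`.
-/

namespace TSLMC

section Terms

variable {V I C F Pi : Type}

theorem FTerm.eval_app (T : Thy V F) (a : Assign V I C) (f : F) (ts : List (FTerm I C F)) :
    (FTerm.app f ts).eval T a = T.ε f (ts.map (FTerm.eval T a)) := by
  rw [FTerm.eval, List.attach_map_val]

theorem FTerm.rename_app (π : Pi) (f : F) (ts : List (FTerm I C F)) :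
    (FTerm.app f ts).rename π = FTerm.app f (ts.map (FTerm.rename π)) := by
  rw [FTerm.rename, List.attach_map_val]

theorem FTerm.embed_app (f : F) (ts : List (FTerm I C F)) :
    (FTerm.app f ts).embed = FTerm.app f (ts.map FTerm.embed) := by
  rw [FTerm.embed, List.attach_map_val]

/-- The variable `x_π`, in the form it takes among the non-`tmp` cells of `CStar`. -/
def varCell (π : Pi) : I ⊕ C → (C × Pi) ⊕ (I × Pi)
  | .inl i => .inr (i, π)
  | .inr c => .inl (c, π)

theorem FTerm.eval_embed_rename (T : Thy V F) (π : Pi)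
    (a : Assign V Empty (CStar (I × Pi) (C × Pi))) :
    ∀ τ : FTerm I C F,
      ((τ.rename π).embed).eval T a = τ.eval T (fun x => a (.inr (.inl (varCell π x))))
  | .inp i => by simp [FTerm.rename, FTerm.embed, FTerm.eval, varCell]
  | .cell c => by simp [FTerm.rename, FTerm.embed, FTerm.eval, varCell]
  | .app f ts => by
    rw [FTerm.rename_app, FTerm.embed_app, FTerm.eval_app, FTerm.eval_app, List.map_map,
      List.map_map]
    congr 1
    refine List.map_congr_left fun t ht => ?_
    exact FTerm.eval_embed_rename T π a t
decreasing_by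
  have := List.sizeOf_lt_of_mem ht
  simp only [FTerm.app.sizeOf_spec]
  omega

end Terms

section Step

variable {V I C F Pi : Type} (T : Thy V F)

def Stmt0.target : Stmt0 I C F → Option C
  | .assert _ => none
  | .assign c _ => some c
  | .havoc c => some c

def Stmt0.Step : Stmt0 I C F → Assign V I C → (C → V) → Prop
  | .assert τ, a, b => τ.eval T a = T.vtrue ∧ ∀ c, b c = a (.inr c)
  | .assign c τ, a, b => b c = τ.eval T a ∧ ∀ c', c' ≠ c → b c' = a (.inr c')
  | .havoc c, a, b => ∀ c', c' ≠ c → b c' = a (.inr c')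

theorem matchesAt_iff_step {init : Assign V I C} {ζ : ℕ → Assign V I C}
    {σ : ℕ → Stmt0 I C F} {t : ℕ} :
    matchesAt T init ζ σ t ↔ (σ t).Step T (prevA init ζ t) (fun c => ζ t (.inr c)) := by
  unfold matchesAt
  split <;> rename_i h <;> rw [h] <;> rfl

theorem Stmt0.Step.frame {st : Stmt0 I C F} {a : Assign V I C} {b : C → V}
    (h : st.Step T a b) {x : C} (hx : st.target ≠ some x) : b x = a (.inr x) := by
  cases st with
  | assert τ => exact h.2 x
  | assign c τ => exact h.2 x fun hxc => hx (hxc ▸ rfl)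
  | havoc c => exact h x fun hxc => hx (hxc ▸ rfl)

theorem Stmt0.target_rename (π : Pi) (st : Stmt0 I C F) :
    (st.rename π).target = st.target.map (·, π) := by
  cases st <;> rfl

theorem Stmt0.target_embed (st : Stmt0 I C F) :
    st.embed.target = st.target.map (.inl ∘ .inl) := by
  cases st <;> rfl

theorem Stmt0.Step.of_embed_rename {π : Pi} {st : Stmt0 I C F}
    {a : Assign V Empty (CStar (I × Pi) (C × Pi))} {b : CStar (I × Pi) (C × Pi) → V}
    (h : ((st.rename π).embed).Step T a b) :
    st.Step T (fun x => a (.inr (.inl (varCell π x)))) (fun c => b (.inl (.inl (c, π)))) := by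
  cases st with
  | assert τ =>
    exact ⟨(FTerm.eval_embed_rename T π a τ).symm.trans h.1, fun c => h.2 _⟩
  | assign c τ =>
    refine ⟨h.1.trans (FTerm.eval_embed_rename T π a τ), fun c' hc' => h.2 _ ?_⟩
    simpa using hc'
  | havoc c => exact fun c' hc' => h _ (by simpa using hc')

end Step

section Frame

variable {V I C F : Type} {T : Thy V F} {init : Assign V I C} {ζ : ℕ → Assign V I C}

theorem Matches.prevA_eq_of_target_ne {σ : ℕ → Stmt0 I C F} (hm : Matches T init ζ σ)
    {x : C} {a b : ℕ} (hab : a ≤ b) (hx : ∀ s, a ≤ s → s < b → (σ s).target ≠ some x) :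
    prevA init ζ b (.inr x) = prevA init ζ a (.inr x) := by
  induction b, hab using Nat.le_induction with
  | base => rfl
  | succ b hab ih =>
    rw [← ih fun s h1 h2 => hx s h1 (by omega)]
    exact ((matchesAt_iff_step T).1 (hm b)).frame T (hx b hab b.lt_succ_self)

theorem fpos_eq_div_mod {σ : ℕ → Stmt I C F} {B : ℕ} (hlen : ∀ t, (σ t).1.length = B)
    (s : ℕ) : fpos σ s = (s / B, s % B) := by
  have hB : 0 < B := hlen 0 ▸ List.length_pos_of_ne_nil (σ 0).2
  induction s with
  | zero => simp [fpos]
  | succ s ih =>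
    have := Nat.div_add_mod s B
    have := Nat.mod_lt s hB
    rw [fpos, ih]
    simp only [hlen]
    split_ifs with hc
    · obtain ⟨hd, hm⟩ := (Nat.div_mod_unique hB).2
        (⟨by omega, hc⟩ : s % B + 1 + B * (s / B) = s + 1 ∧ _)
      rw [hd, hm]
    · obtain ⟨hd, hm⟩ := (Nat.div_mod_unique hB).2
        (⟨by rw [Nat.mul_succ]; omega, hB⟩ : 0 + B * (s / B + 1) = s + 1 ∧ _)
      rw [hd, hm]

theorem flatten_mul_add {σ : ℕ → Stmt I C F} {B : ℕ} (hlen : ∀ t, (σ t).1.length = B)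
    {q r : ℕ} (hr : r < (σ q).1.length) : flatten σ (B * q + r) = (σ q).1[r] := by
  have hrB : r < B := hlen q ▸ hr
  obtain ⟨hdiv, hmod⟩ := (Nat.div_mod_unique (by omega)).2
    (⟨Nat.add_comm _ _, hrB⟩ : r + B * q = B * q + r ∧ _)
  simp only [flatten, fpos_eq_div_mod hlen, hdiv, hmod, List.getD_eq_getElem _ _ hr]

theorem Matches.prevA_mul_add_eq_of_target_ne {σ : ℕ → Stmt I C F}
    (hm : Matches T init ζ (flatten σ)) {B : ℕ} (hlen : ∀ t, (σ t).1.length = B) {x : C}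
    {q r₁ r₂ : ℕ} (h12 : r₁ ≤ r₂) (h2 : r₂ ≤ B)
    (hx : ∀ r (hr : r < (σ q).1.length), r₁ ≤ r → r < r₂ → (σ q).1[r].target ≠ some x) :
    prevA init ζ (B * q + r₂) (.inr x) = prevA init ζ (B * q + r₁) (.inr x) := by
  refine hm.prevA_eq_of_target_ne (by omega) fun s h1 h2 => ?_
  obtain ⟨r, rfl⟩ : ∃ r, s = B * q + r := ⟨s - B * q, by omega⟩
  have hr : r < (σ q).1.length := by rw [hlen]; omega
  rw [flatten_mul_add hlen hr]
  exact hx r hr (by omega) (by omega)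

end Frame

section Combine

variable {V I C F : Type} (T : Thy V F) (O : Ops V F T) (ρ : List (FTerm I C F))
  (υ : List (C × FTerm I C F)) (inps : List I) (s : List (Stmt0 I C F)) (l : Set (AP I C F))

theorem combine_length :
    (combine T O ρ υ inps s l).1.length = υ.length + s.length + inps.length + 2 := by
  simp only [combine, List.length_append, List.length_mapIdx, List.length_map, List.length_cons,
    List.length_nil]

theorem combine_getElem_stmt {q : ℕ} (hq : q < s.length) :
    (combine T O ρ υ inps s l).1[υ.length + q]'(by rw [combine_length]; omega) =
      s[q].embed := by
  simp [combine, hq]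

theorem combine_target_eq_cell {r : ℕ} (hr : r < (combine T O ρ υ inps s l).1.length) {c : C}
    (h : (combine T O ρ υ inps s l).1[r].target = some (.inl (.inl c))) :
    ∃ q, ∃ hq : q < s.length, r = υ.length + q ∧ s[q].target = some c := by
  rw [combine_length] at hr
  simp only [combine, List.append_assoc, List.getElem_append, List.length_mapIdx,
    List.getElem_mapIdx, List.length_map, List.getElem_map, List.getElem_cons] at h
  split_ifs at h with h1 h2 h3 h4 h5
  · simp [Stmt0.target] at h
  · rw [Stmt0.target_embed, Option.map_eq_some_iff] at h
    obtain ⟨c', hc', hcc'⟩ := h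
    obtain rfl : c' = c := by simpa using hcc'
    exact ⟨r - υ.length, h2, by omega, hc'⟩
  all_goals first | omega | simp [Stmt0.target] at h

theorem combine_target_eq_input {r : ℕ} (hr : r < (combine T O ρ υ inps s l).1.length)
    {i : I} (h : (combine T O ρ υ inps s l).1[r].target = some (.inl (.inr i))) :
    υ.length + s.length ≤ r ∧ r < υ.length + s.length + inps.length := by
  rw [combine_length] at hr
  simp only [combine, List.append_assoc, List.getElem_append, List.length_mapIdx,
    List.getElem_mapIdx, List.length_map, List.getElem_map, List.getElem_cons] at h
  split_ifs at h with h1 h2 h3 h4 h5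
  · simp [Stmt0.target] at h
  · simp [Stmt0.target_embed] at h
  · omega
  all_goals first | omega | simp [Stmt0.target] at h

end Combine

section Composed

variable {V I C F : Type} {n : ℕ} (σs : Fin n → ℕ → Stmt0 I C F) (t : ℕ)

theorem composedTrace_length : (composedTrace σs t).length = n := by
  simp [composedTrace]

theorem composedTrace_getElem (j : Fin n) :
    (composedTrace σs t)[(j : ℕ)]'(by rw [composedTrace_length]; exact j.isLt) =
      (σs j t).rename j := by
  simp [composedTrace]

theorem composedTrace_target_eq {q : ℕ} (hq : q < (composedTrace σs t).length) {c : C}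
    {p : Fin n} (h : (composedTrace σs t)[q].target = some (c, p)) : (p : ℕ) = q := by
  rw [composedTrace_length] at hq
  rw [composedTrace_getElem σs t ⟨q, hq⟩, Stmt0.target_rename, Option.map_eq_some_iff] at h
  obtain ⟨_, _, hcp⟩ := h
  simp only [Prod.mk.injEq] at hcp
  rw [← hcp.2]

end Composed

section Combined

variable {V I C F : Type} (T : Thy V F) (O : Ops V F T) {n : ℕ}
  (ρ : List (FTerm (I × Fin n) (C × Fin n) F))
  (υ : List ((C × Fin n) × FTerm (I × Fin n) (C × Fin n) F))
  (inps : List (I × Fin n)) (σs : Fin n → ℕ → Stmt0 I C F)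
  (X : ℕ → Set (AP (I × Fin n) (C × Fin n) F))

noncomputable def combinedTrace (t : ℕ) : Stmt Empty (CStar (I × Fin n) (C × Fin n)) F :=
  combine T O ρ υ inps (composedTrace σs t) (X t)

theorem combinedTrace_length (t : ℕ) :
    (combinedTrace T O ρ υ inps σs X t).1.length = inps.length + υ.length + n + 2 := by
  rw [combinedTrace, combine_length, composedTrace_length]
  omega

theorem combinedTrace_getElem_stmt (t : ℕ) (j : Fin n) :
    (combinedTrace T O ρ υ inps σs X t).1[υ.length + j]'(by
        rw [combinedTrace_length]; omega) = ((σs j t).rename j).embed := by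
  simp only [combinedTrace]
  rw [combine_getElem_stmt T O ρ υ inps _ _ (by rw [composedTrace_length]; exact j.isLt),
    composedTrace_getElem]

theorem combinedTrace_target_eq_cell {t r : ℕ}
    (hr : r < (combinedTrace T O ρ υ inps σs X t).1.length) {c : C} {p : Fin n}
    (h : (combinedTrace T O ρ υ inps σs X t).1[r].target = some (.inl (.inl (c, p)))) :
    r = υ.length + p := by
  obtain ⟨q, hq, rfl, hcq⟩ := combine_target_eq_cell T O ρ υ inps _ _ hr h
  rw [composedTrace_target_eq σs t hq hcq]

theorem combinedTrace_target_eq_input {t r : ℕ}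
    (hr : r < (combinedTrace T O ρ υ inps σs X t).1.length) {ip : I × Fin n}
    (h : (combinedTrace T O ρ υ inps σs X t).1[r].target = some (.inl (.inr ip))) :
    υ.length + n ≤ r ∧ r < υ.length + n + inps.length := by
  have := combine_target_eq_input T O ρ υ inps _ _ hr h
  rwa [composedTrace_length] at this

theorem combinedTrace_target_eq_varCell {t r : ℕ}
    (hr : r < (combinedTrace T O ρ υ inps σs X t).1.length) {j : Fin n} {x : I ⊕ C}
    (h : (combinedTrace T O ρ υ inps σs X t).1[r].target = some (.inl (varCell j x))) :
    υ.length + j ≤ r ∧ r < υ.length + n + inps.length := by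
  cases x with
  | inl i =>
    have := combinedTrace_target_eq_input T O ρ υ inps σs X hr h
    omega
  | inr c =>
    have := combinedTrace_target_eq_cell T O ρ υ inps σs X hr h
    omega

end Combined

section Reduced

variable {V I C F : Type} {n : ℕ}

theorem iotaIdx_add_one {B : ℕ} (hB : 3 ≤ B) (t : ℕ) : iotaIdx B t + 1 = B * t + (B - 2) := by
  rw [iotaIdx, Nat.mul_succ]
  omega

theorem reduceTr_apply (B : ℕ) (j : Fin n)
    (ζ : ℕ → Assign V Empty (CStar (I × Fin n) (C × Fin n))) (t : ℕ) (x : I ⊕ C) :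
    reduceTr B j ζ t x = ζ (iotaIdx B t) (.inr (.inl (varCell j x))) := by
  cases x <;> rfl

variable {T : Thy V F} {O : Ops V F T} {init : Assign V I C}
  {initC : Assign V Empty (CStar (I × Fin n) (C × Fin n))}
  {ρ : List (FTerm (I × Fin n) (C × Fin n) F)}
  {υ : List ((C × Fin n) × FTerm (I × Fin n) (C × Fin n) F)}
  {inps : List (I × Fin n)} {σs : Fin n → ℕ → Stmt0 I C F}
  {X : ℕ → Set (AP (I × Fin n) (C × Fin n) F)}
  {ζ : ℕ → Assign V Empty (CStar (I × Fin n) (C × Fin n))}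

theorem reduceTr_cell_eq
    (h : MatchesC T initC ζ (combinedTrace T O ρ υ inps σs X)) (j : Fin n) (t : ℕ) (c : C) :
    reduceTr (inps.length + υ.length + n + 2) j ζ t (.inr c) =
      ζ ((inps.length + υ.length + n + 2) * t + (υ.length + j)) (.inr (.inl (.inl (c, j)))) := by
  have := j.isLt
  rw [reduceTr_apply]
  change prevA initC ζ (iotaIdx _ t + 1) _ = prevA initC ζ (_ * t + (υ.length + j + 1)) _
  rw [iotaIdx_add_one (by omega)]
  refine h.prevA_mul_add_eq_of_target_ne (combinedTrace_length T O ρ υ inps σs X) (by omega)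
    (by omega) fun r hr _ _ hrc => ?_
  have := combinedTrace_target_eq_cell T O ρ υ inps σs X hr hrc
  omega

theorem prevA_varCell_eq_prevA_reduceTr
    (hic : ∀ p : C × Fin n, initC (.inr (.inl (.inl p))) = init (.inr p.1))
    (hii : ∀ p : I × Fin n, initC (.inr (.inl (.inr p))) = init (.inl p.1))
    (h : MatchesC T initC ζ (combinedTrace T O ρ υ inps σs X)) (j : Fin n) (t : ℕ)
    (x : I ⊕ C) :
    prevA initC ζ ((inps.length + υ.length + n + 2) * t + (υ.length + j))
        (.inr (.inl (varCell j x))) =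
      prevA init (reduceTr (inps.length + υ.length + n + 2) j ζ) t x := by
  have hlen := combinedTrace_length T O ρ υ inps σs X
  have := j.isLt
  have hblock := h.prevA_mul_add_eq_of_target_ne hlen (x := .inl (varCell j x)) (q := t)
    (Nat.zero_le (υ.length + j)) (by omega) fun r hr _ hrj hx => by
      have := combinedTrace_target_eq_varCell T O ρ υ inps σs X hr hx
      omega
  rw [hblock]
  cases t with
  | zero => cases x with
    | inl i => exact hii (i, j)
    | inr c => exact hic (c, j)
  | succ t =>
    change _ = prevA initC ζ (iotaIdx _ t + 1) (.inr (.inl (varCell j x)))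
    rw [iotaIdx_add_one (by omega), Nat.mul_succ]
    refine h.prevA_mul_add_eq_of_target_ne hlen (by omega) le_rfl fun r hr hr2 _ hx => ?_
    have := combinedTrace_target_eq_varCell T O ρ υ inps σs X hr hx
    omega

end Reduced

theorem hyper_reduced_matches_general
    {V I C F : Type} (T : Thy V F) (O : Ops V F T) {n : ℕ}
    (init : Assign V I C)
    (initC : Assign V Empty (CStar (I × Fin n) (C × Fin n)))
    (hic : ∀ p : C × Fin n, initC (.inr (.inl (.inl p))) = init (.inr p.1))
    (hii : ∀ p : I × Fin n, initC (.inr (.inl (.inr p))) = init (.inl p.1))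
    (ρ : List (FTerm (I × Fin n) (C × Fin n) F))
    (υ : List ((C × Fin n) × FTerm (I × Fin n) (C × Fin n) F))
    (inps : List (I × Fin n))
    (σs : Fin n → ℕ → Stmt0 I C F) (X : ℕ → Set (AP (I × Fin n) (C × Fin n) F))
    (ζ : ℕ → Assign V Empty (CStar (I × Fin n) (C × Fin n)))
    (h : MatchesC T initC ζ (fun t => combine T O ρ υ inps (composedTrace σs t) (X t))) :
    ∀ j : Fin n,
      Matches T init (reduceTr (inps.length + υ.length + n + 2) j ζ) (σs j) := by
  replace h : MatchesC T initC ζ (combinedTrace T O ρ υ inps σs X) := h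
  intro j t
  have hr : υ.length + (j : ℕ) < (combinedTrace T O ρ υ inps σs X t).1.length := by
    rw [combinedTrace_length]; omega
  have hstep := (matchesAt_iff_step T).1
    (h ((inps.length + υ.length + n + 2) * t + (υ.length + j)))
  rw [flatten_mul_add (combinedTrace_length T O ρ υ inps σs X) hr,
    combinedTrace_getElem_stmt] at hstep
  rw [matchesAt_iff_step]
  convert hstep.of_embed_rename T using 1
  · exact funext fun x => (prevA_varCell_eq_prevA_reduceTr hic hii h j t x).symm
  · exact funext fun c => reduceTr_cell_eq h j t c

theorem hyper_reduced_matches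
    {V I C F : Type} (T : Thy V F) (O : Ops V F T) {n : ℕ}
    (init : Assign V I C)
    (initC : Assign V Empty (CStar (I × Fin n) (C × Fin n)))
    (hic : ∀ p : C × Fin n, initC (.inr (.inl (.inl p))) = init (.inr p.1))
    (hii : ∀ p : I × Fin n, initC (.inr (.inl (.inr p))) = init (.inl p.1))
    (ρ : List (FTerm (I × Fin n) (C × Fin n) F))
    (υ : List ((C × Fin n) × FTerm (I × Fin n) (C × Fin n) F))
    (inps : List (I × Fin n)) (hinps : ∀ p : I × Fin n, p ∈ inps) (hnd : inps.Nodup)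
    (σs : Fin n → ℕ → Stmt0 I C F) (X : ℕ → Set (AP (I × Fin n) (C × Fin n) F))
    (ζ : ℕ → Assign V Empty (CStar (I × Fin n) (C × Fin n)))
    (h : MatchesC T initC ζ (fun t => combine T O ρ υ inps (composedTrace σs t) (X t))) :
    ∀ j : Fin n,
      Matches T init (reduceTr (inps.length + υ.length + n + 2) j ζ) (σs j) :=
  hyper_reduced_matches_general T O init initC hic hii ρ υ inps σs X ζ h

end TSLMC
end

section
/- Let σ ∈ Stmt₀^ω and ζ a computation with ζ ◁ σ. Then the reduction of the adapted computation recovers ζ, i.e. (ζ̃)|σ = ζ: for every t, the assignment of ζ̃ at index ι(t) = (|𝕀| + |υ| + 3)·(t+1) − 3, restricted to 𝕀 ∪ ℂ, equals ζ_t. -/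
namespace TSLMC
open scoped Classical
variable {V I C F : Type}

theorem iotaIdx_add_three (n t : ℕ) : iotaIdx (n + 3) t = (n + 3) * t + n := by
  unfold iotaIdx
  rw [Nat.mul_succ]
  omega

theorem iotaIdx_div_add_three (n t : ℕ) : iotaIdx (n + 3) t / (n + 3) = t := by
  rw [iotaIdx_add_three, Nat.mul_add_div (by omega), Nat.div_eq_of_lt (by omega), add_zero]

theorem iotaIdx_mod_add_three (n t : ℕ) : iotaIdx (n + 3) t % (n + 3) = n := by
  rw [iotaIdx_add_three, Nat.mul_add_mod, Nat.mod_eq_of_lt (by omega)]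

section adapt

variable (T : Thy V F) (υ : List (C × FTerm I C F)) (inps : List I)
  (init : Assign V I C) (initC : Assign V Empty (CStar I C)) (ζ : ℕ → Assign V I C)

theorem adapt_cell_of_le_mod {idx : ℕ} (h : υ.length ≤ idx % (υ.length + inps.length + 3))
    (c : C) :
    adapt T υ inps init initC ζ idx (.inr (.inl (.inl c))) =
      ζ (idx / (υ.length + inps.length + 3)) (.inr c) := by
  simp only [adapt, if_neg (Nat.not_lt.mpr h)]

/-- From offset `|υ| + |𝕀|` on, the block of `ζ̃` has overwritten every input, the one at
position `p` of `inps` at offset `|υ| + 1 + p`. -/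
theorem adapt_input_of_le_mod {idx : ℕ}
    (h : υ.length + inps.length ≤ idx % (υ.length + inps.length + 3))
    {i : I} (hi : i ∈ inps) :
    adapt T υ inps init initC ζ idx (.inr (.inl (.inr i))) =
      ζ (idx / (υ.length + inps.length + 3)) (.inl i) := by
  have hpos : inps.idxOf i < inps.length := List.idxOf_lt_length_of_mem hi
  simp only [adapt]
  split_ifs <;> first | rfl | omega

end adapt

theorem reduce_adapt_eq_general
    {V I C F : Type} (T : Thy V F)
    (init : Assign V I C) (initC : Assign V Empty (CStar I C))
    (υ : List (C × FTerm I C F))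
    (inps : List I) (hinps : ∀ i : I, i ∈ inps)
    (ζ : ℕ → Assign V I C) :
    reduceC (inps.length + υ.length + 3) (adapt T υ inps init initC ζ) = ζ := by
  funext t x
  have hdiv := iotaIdx_div_add_three (υ.length + inps.length) t
  have hmod := iotaIdx_mod_add_three (υ.length + inps.length) t
  rw [reduceC, add_comm inps.length]
  cases x with
  | inl i =>
    rw [Sum.swap_inl, adapt_input_of_le_mod T υ inps init initC ζ hmod.ge (hinps i), hdiv]
  | inr c =>
    rw [Sum.swap_inr, adapt_cell_of_le_mod T υ inps init initC ζ (by omega), hdiv]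

theorem reduce_adapt_eq
    {V I C F : Type} (T : Thy V F)
    (init : Assign V I C) (initC : Assign V Empty (CStar I C))
    (hic : ∀ c : C, initC (.inr (.inl (.inl c))) = init (.inr c))
    (hii : ∀ i : I, initC (.inr (.inl (.inr i))) = init (.inl i))
    (υ : List (C × FTerm I C F))
    (inps : List I) (hinps : ∀ i : I, i ∈ inps) (hnd : inps.Nodup)
    (σ : ℕ → Stmt0 I C F) (ζ : ℕ → Assign V I C)
    (hζ : Matches T init ζ σ) :
    reduceC (inps.length + υ.length + 3) (adapt T υ inps init initC ζ) = ζ :=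
  reduce_adapt_eq_general T init initC υ inps hinps ζ

end TSLMC
end
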